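/- Let M ∈ ℝ^{f×f}, Δw ∈ ℝ^f, and let A be an f×k random matrix whose entries are independent, mean zero, variance 1/k, with fourth moment E[a_{ij}⁴] = 3/k². Let v = M·A·Aᵀ·Δw. Then the covariance matrix of v is Cov(v) = (1/k)·(M·Δw)(M·Δw)ᵀ + (1/k)·(M·Mᵀ)·‖Δw‖². -/

import Mathlib

/-!
Vectorise `A` into the independent family `X (p, c) = A p c`. Each coordinate of `v` is then a
quadratic form in `X`: `vᵢ = Xᵀ Bᵢ X` with `Bᵢ = (Mᵢ Δwᵀ) ⊗ I_k`. For independent centred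
variables with variance `σ²` and Gaussian fourth moment `3σ⁴`, Isserlis' formula
`E[XₐX_bX_cX_d] = σ⁴ (δ_ab δ_cd + δ_ac δ_bd + δ_ad δ_bc)` gives
`Cov(XᵀBX, XᵀCX) = σ⁴ (tr(BCᵀ) + tr(BC))`, and the traces of the Kronecker products are
`k ‖Δw‖² (MMᵀ)ᵢⱼ` and `k (MΔw)ᵢ (MΔw)ⱼ`. With `σ² = 1/k` this is the claimed covariance.
-/

open MeasureTheory ProbabilityTheory Matrix
open scoped Kronecker

instance : ENNReal.HolderTriple 4 4 2 := ⟨by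
  rw [← two_mul, show (4 : ENNReal) = 2 * 2 by norm_num, ENNReal.mul_inv (by simp) (by simp),
    ← mul_assoc, ENNReal.mul_inv_cancel (by simp) (by simp), one_mul]⟩

namespace Matrix

variable {l m n R : Type*} [Fintype m] [Fintype n] [CommSemiring R]

lemma dotProduct_mulVec_self_eq_sum (x : m → R) (D : Matrix m m R) :
    x ⬝ᵥ D *ᵥ x = ∑ p : m × m, D p.1 p.2 * (x p.1 * x p.2) := by
  simp only [dotProduct, mulVec, Finset.mul_sum, Fintype.sum_prod_type]
  exact Finset.sum_congr rfl fun _ _ => Finset.sum_congr rfl fun _ _ => by ring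

variable [DecidableEq n]

lemma mul_mul_transpose_mulVec_apply (M : Matrix l m R) (A : Matrix m n R) (w : m → R) (i : l) :
    ((M * A * Aᵀ) *ᵥ w) i
      = (fun p : m × n => A p.1 p.2) ⬝ᵥ (vecMulVec (M i) w ⊗ₖ 1) *ᵥ (fun p => A p.1 p.2) := by
  rw [Matrix.mul_assoc, ← mulVec_mulVec, ← mulVec_mulVec]
  simp only [mulVec, dotProduct, kroneckerMap_apply, one_apply, vecMulVec_apply, transpose_apply,
    Fintype.sum_prod_type, Finset.mul_sum, ite_mul, mul_ite, zero_mul, mul_zero,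
    Finset.sum_ite_eq, Finset.mem_univ, if_true]
  exact Finset.sum_congr rfl fun _ _ => Finset.sum_congr rfl fun _ _ =>
    Finset.sum_congr rfl fun _ _ => by ring

lemma trace_vecMulVec_kronecker_one_mul_transpose (a b c d : m → R) :
    trace ((vecMulVec a b ⊗ₖ (1 : Matrix n n R)) * (vecMulVec c d ⊗ₖ 1)ᵀ)
      = Fintype.card n * ((a ⬝ᵥ c) * (b ⬝ᵥ d)) := by
  rw [← kroneckerMap_transpose, transpose_one, ← mul_kronecker_mul, mul_one, trace_kronecker,
    trace_one, transpose_vecMulVec, vecMulVec_mul_vecMulVec, trace_vecMulVec, dotProduct_smul,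
    smul_eq_mul]
  ring

lemma trace_vecMulVec_kronecker_one_mul (a b c d : m → R) :
    trace ((vecMulVec a b ⊗ₖ (1 : Matrix n n R)) * (vecMulVec c d ⊗ₖ 1))
      = Fintype.card n * ((a ⬝ᵥ d) * (b ⬝ᵥ c)) := by
  rw [← mul_kronecker_mul, mul_one, trace_kronecker, trace_one, vecMulVec_mul_vecMulVec,
    trace_vecMulVec, dotProduct_smul, smul_eq_mul]
  ring

end Matrix

namespace ProbabilityTheory

variable {Ω ι : Type*} {mΩ : MeasurableSpace Ω} {μ : Measure Ω} {X : ι → Ω → ℝ}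

lemma memLp_two_dotProduct_mulVec_self [Fintype ι] (hL4 : ∀ i, MemLp (X i) 4 μ)
    (D : Matrix ι ι ℝ) : MemLp (fun ω => (fun i => X i ω) ⬝ᵥ D *ᵥ fun i => X i ω) 2 μ := by
  simp only [dotProduct_mulVec_self_eq_sum]
  exact memLp_finsetSum _ fun (p : ι × ι) _ =>
    ((hL4 p.2).mul' (hL4 p.1) : MemLp _ 2 μ).const_mul _

section Independent

variable (hmeas : ∀ i, Measurable (X i)) (hindep : iIndepFun X μ)
include hmeas hindep

lemma integral_mul_mul_mul_eq_zero_of_ne (hmean : ∀ i, ∫ ω, X i ω ∂μ = 0) {a b c d : ι}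
    (hda : d ≠ a) (hdb : d ≠ b) (hdc : d ≠ c) :
    ∫ ω, X a ω * X b ω * X c ω * X d ω ∂μ = 0 := by
  classical
  have hST : Disjoint ({a, b, c} : Finset ι) {d} := by simp [hda, hdb, hdc]
  have h : IndepFun (fun ω => X a ω * X b ω * X c ω) (X d) μ :=
    (hindep.indepFun_finset _ _ hST hmeas).comp
      (φ := fun x : ({a, b, c} : Finset ι) → ℝ =>
        x ⟨a, by simp⟩ * x ⟨b, by simp⟩ * x ⟨c, by simp⟩)
      (ψ := fun x : ({d} : Finset ι) → ℝ => x ⟨d, by simp⟩) (by fun_prop) (by fun_prop)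
  simpa [hmean d] using h.integral_mul_eq_mul_integral (by fun_prop) (by fun_prop)

lemma integral_mul_mul_mul_self_eq {a b c : ι} (hac : a ≠ c) (hbc : b ≠ c) :
    ∫ ω, X a ω * X b ω * X c ω * X c ω ∂μ
      = (∫ ω, X a ω * X b ω ∂μ) * ∫ ω, X c ω ^ 2 ∂μ := by
  have h := (hindep.indepFun_prodMk hmeas a b c hac hbc).comp
    (φ := fun x => x.1 * x.2) (ψ := fun x => x ^ 2) (by fun_prop) (by fun_prop)
  simpa [Function.comp_def, mul_assoc, sq] using
    h.integral_mul_eq_mul_integral (by fun_prop) (by fun_prop)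

variable [DecidableEq ι] {σ2 : ℝ} (hmean : ∀ i, ∫ ω, X i ω ∂μ = 0)
  (hvar : ∀ i, ∫ ω, X i ω ^ 2 ∂μ = σ2)
include hmean hvar

lemma integral_mul_eq_ite (a b : ι) :
    ∫ ω, X a ω * X b ω ∂μ = if a = b then σ2 else 0 := by
  split_ifs with hab
  · simpa [hab, sq] using hvar b
  · simpa [hmean a] using
      (hindep.indepFun hab).integral_mul_eq_mul_integral (hmeas a).aestronglyMeasurable
        (hmeas b).aestronglyMeasurable

variable (hfourth : ∀ i, ∫ ω, X i ω ^ 4 ∂μ = 3 * σ2 ^ 2)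
include hfourth

lemma integral_mul_mul_mul_self_eq_ite (a b c : ι) :
    ∫ ω, X a ω * X b ω * X c ω * X c ω ∂μ = σ2 ^ 2 *
      ((if a = b then 1 else 0) + 2 * (if a = c then 1 else 0) * (if b = c then 1 else 0)) := by
  by_cases hac : a = c
  · subst hac
    by_cases hba : b = a
    · subst hba
      calc ∫ ω, X b ω * X b ω * X b ω * X b ω ∂μ = ∫ ω, X b ω ^ 4 ∂μ := by
            congr 1; ext ω; ring
        _ = _ := by rw [hfourth, if_pos rfl]; ring
    · calc ∫ ω, X a ω * X b ω * X a ω * X a ω ∂μ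
            = ∫ ω, X a ω * X a ω * X a ω * X b ω ∂μ := by congr 1; ext ω; ring
        _ = _ := by
          rw [integral_mul_mul_mul_eq_zero_of_ne hmeas hindep hmean hba hba hba]
          simp [Ne.symm hba, hba]
  · by_cases hbc : b = c
    · subst hbc
      calc ∫ ω, X a ω * X b ω * X b ω * X b ω ∂μ
            = ∫ ω, X b ω * X b ω * X b ω * X a ω ∂μ := by congr 1; ext ω; ring
        _ = _ := by
          rw [integral_mul_mul_mul_eq_zero_of_ne hmeas hindep hmean hac hac hac]
          simp [hac]
    · rw [integral_mul_mul_mul_self_eq hmeas hindep hac hbc,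
        integral_mul_eq_ite hmeas hindep hmean hvar, hvar]
      split_ifs <;> simp_all [sq]

lemma integral_mul_mul_mul_eq_ite (a b c d : ι) :
    ∫ ω, X a ω * X b ω * X c ω * X d ω ∂μ = σ2 ^ 2 *
      ((if a = b then 1 else 0) * (if c = d then 1 else 0)
        + (if a = c then 1 else 0) * (if b = d then 1 else 0)
        + (if a = d then 1 else 0) * (if b = c then 1 else 0)) := by
  have hsq := integral_mul_mul_mul_self_eq_ite hmeas hindep hmean hvar hfourth
  by_cases hdc : d = c
  · subst hdc
    rw [hsq]
    split_ifs <;> subst_vars <;> first | ring1 | simp_all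
  by_cases hdb : d = b
  · subst hdb
    calc ∫ ω, X a ω * X d ω * X c ω * X d ω ∂μ = ∫ ω, X a ω * X c ω * X d ω * X d ω ∂μ := by
          congr 1; ext ω; ring
      _ = _ := by
        rw [hsq]
        split_ifs <;> subst_vars <;> first | ring1 | simp_all
  by_cases hda : d = a
  · subst hda
    calc ∫ ω, X d ω * X b ω * X c ω * X d ω ∂μ = ∫ ω, X b ω * X c ω * X d ω * X d ω ∂μ := by
          congr 1; ext ω; ring
      _ = _ := by
        rw [hsq]
        split_ifs <;> subst_vars <;> first | ring1 | simp_all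
  rw [integral_mul_mul_mul_eq_zero_of_ne hmeas hindep hmean hda hdb hdc]
  simp [Ne.symm hda, Ne.symm hdb, Ne.symm hdc]

variable (hL4 : ∀ i, MemLp (X i) 4 μ)
include hL4

lemma covariance_mul_mul_eq_ite (a b c d : ι) :
    cov[fun ω => X a ω * X b ω, fun ω => X c ω * X d ω; μ] = σ2 ^ 2 *
      ((if a = c then 1 else 0) * (if b = d then 1 else 0)
        + (if a = d then 1 else 0) * (if b = c then 1 else 0)) := by
  have := hindep.isProbabilityMeasure
  rw [covariance_eq_sub ((hL4 b).mul' (hL4 a)) ((hL4 d).mul' (hL4 c))]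
  simp only [Pi.mul_apply, ← mul_assoc]
  rw [integral_mul_mul_mul_eq_ite hmeas hindep hmean hvar hfourth,
    integral_mul_eq_ite hmeas hindep hmean hvar, integral_mul_eq_ite hmeas hindep hmean hvar]
  split_ifs <;> ring

lemma covariance_dotProduct_mulVec_self [Fintype ι] (B C : Matrix ι ι ℝ) :
    cov[fun ω => (fun i => X i ω) ⬝ᵥ B *ᵥ (fun i => X i ω),
        fun ω => (fun i => X i ω) ⬝ᵥ C *ᵥ (fun i => X i ω); μ]
      = σ2 ^ 2 * (trace (B * Cᵀ) + trace (B * C)) := by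
  have := hindep.isProbabilityMeasure
  have hmem (D : Matrix ι ι ℝ) (p : ι × ι) :
      MemLp (fun ω => D p.1 p.2 * (X p.1 ω * X p.2 ω)) 2 μ :=
    ((hL4 p.2).mul' (hL4 p.1)).const_mul _
  simp only [dotProduct_mulVec_self_eq_sum]
  rw [covariance_fun_sum_fun_sum (hmem B) (hmem C)]
  simp only [covariance_const_mul_left, covariance_const_mul_right,
    covariance_mul_mul_eq_ite hmeas hindep hmean hvar hfourth hL4]
  simp only [mul_ite, mul_one, mul_zero, mul_add, Finset.sum_add_distrib, Fintype.sum_prod_type,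
    Finset.sum_ite_eq, Finset.mem_univ, if_true, Finset.sum_ite_irrel, Finset.sum_const_zero,
    trace, diag_apply, mul_apply, transpose_apply, Finset.mul_sum]
  congr 1 <;> exact Finset.sum_congr rfl fun _ _ => Finset.sum_congr rfl fun _ _ => by ring

end Independent

end ProbabilityTheory

theorem covariance_of_projection_general
    {Ω : Type*} [MeasureSpace Ω]
    (f k : ℕ)
    (A : Ω → Matrix (Fin f) (Fin k) ℝ)
    (hmeas : ∀ i j, Measurable (fun ω => A ω i j))
    (hindep : iIndepFun
      (fun (p : Fin f × Fin k) ω => A ω p.1 p.2) volume)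
    (hmean : ∀ i j, ∫ ω, A ω i j = 0)
    (hvar : ∀ i j, ∫ ω, (A ω i j) ^ 2 = 1 / k)
    (hfourth : ∀ i j, ∫ ω, (A ω i j) ^ 4 = 3 / (k : ℝ) ^ 2)
    (hL4 : ∀ i j, MemLp (fun ω => A ω i j) 4 volume)
    (M : Matrix (Fin f) (Fin f) ℝ) (Δw : Fin f → ℝ)
    (v : Ω → Fin f → ℝ)
    (hv : ∀ ω, v ω = (M * A ω * (A ω)ᵀ).mulVec Δw) :
    ∀ i j, (∫ ω, v ω i * v ω j) - (∫ ω, v ω i) * (∫ ω, v ω j) =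
      (1 / k) * (M.mulVec Δw i * M.mulVec Δw j)
        + (1 / k) * (M * Mᵀ) i j * (∑ l, (Δw l) ^ 2) := by
  intro i j
  have := hindep.isProbabilityMeasure
  set X : Fin f × Fin k → Ω → ℝ := fun p ω => A ω p.1 p.2
  have hvB (i : Fin f) :
      (fun ω => v ω i) = fun ω => (fun p => X p ω) ⬝ᵥ (vecMulVec (M i) Δw ⊗ₖ 1) *ᵥ fun p => X p ω :=
    funext fun ω => by rw [hv, mul_mul_transpose_mulVec_apply]
  have hmem (i : Fin f) : MemLp (fun ω => v ω i) 2 volume :=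
    hvB i ▸ memLp_two_dotProduct_mulVec_self (X := X) (fun p => hL4 p.1 p.2) _
  calc _ = cov[fun ω => v ω i, fun ω => v ω j] := (covariance_eq_sub (hmem i) (hmem j)).symm
    _ = (1 / k) ^ 2 * (k * ((M i ⬝ᵥ M j) * (Δw ⬝ᵥ Δw)) + k * ((M i ⬝ᵥ Δw) * (M j ⬝ᵥ Δw))) := by
      rw [hvB, hvB, covariance_dotProduct_mulVec_self (X := X) (fun p => hmeas p.1 p.2) hindep
        (fun p => hmean p.1 p.2) (fun p => hvar p.1 p.2)
        (fun p => (hfourth p.1 p.2).trans (by ring)) (fun p => hL4 p.1 p.2),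
        trace_vecMulVec_kronecker_one_mul, trace_vecMulVec_kronecker_one_mul_transpose,
        Fintype.card_fin, dotProduct_comm Δw (M j)]
    _ = _ := by
      -- `(1 / k) ^ 2 * k = 1 / k` holds for `k = 0` as well, since `0⁻¹ = 0`.
      simp only [mulVec, mul_apply, transpose_apply, dotProduct, sq]
      field_simp
      ring

/-- With `A` an `f × k` random matrix of independent entries with mean 0,
variance `1/k` and fourth moment `3/k²`, and `v = M * A * Aᵀ * Δw`, the covariance
matrix of `v` is `(1/k)(MΔw)(MΔw)ᵀ + (1/k)(MMᵀ)‖Δw‖²`. -/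
theorem covariance_of_projection
    {Ω : Type*} [MeasureSpace Ω] [IsProbabilityMeasure (volume : Measure Ω)]
    (f k : ℕ) (hk : 0 < k)
    (A : Ω → Matrix (Fin f) (Fin k) ℝ)
    (hmeas : ∀ i j, Measurable (fun ω => A ω i j))
    (hindep : iIndepFun
      (fun (p : Fin f × Fin k) ω => A ω p.1 p.2) volume)
    (hmean : ∀ i j, ∫ ω, A ω i j = 0)
    (hvar : ∀ i j, ∫ ω, (A ω i j) ^ 2 = 1 / k)
    (hfourth : ∀ i j, ∫ ω, (A ω i j) ^ 4 = 3 / (k : ℝ) ^ 2)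
    (hL4 : ∀ i j, MemLp (fun ω => A ω i j) 4 volume)
    (M : Matrix (Fin f) (Fin f) ℝ) (Δw : Fin f → ℝ)
    (v : Ω → Fin f → ℝ)
    (hv : ∀ ω, v ω = (M * A ω * (A ω)ᵀ).mulVec Δw) :
    ∀ i j, (∫ ω, v ω i * v ω j) - (∫ ω, v ω i) * (∫ ω, v ω j) =
      (1 / k) * (M.mulVec Δw i * M.mulVec Δw j)
        + (1 / k) * (M * Mᵀ) i j * (∑ l, (Δw l) ^ 2) :=
  covariance_of_projection_general f k A hmeas hindep hmean hvar hfourth hL4 M Δw v hv
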